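/- For p ∈ [0, 1/2), define ρ_p(R) = p(1 − D(R)) + (1−p) D(R) where D(R) is the inverse of R = 1 − H₂(D). Then as R → 0⁺, the decay rate I_p(R) = −(1/R){ln 2 + (1/2)ln ρ_p(R) + (1/2)ln(1 − ρ_p(R))} converges to a finite positive limit; specifically, using 1/2 − ρ_p(R) = (1−2p)(1/2 − D(R)) and the asymptotics of D(R) near R = 0, the limit equals (1−2p)²·(ln 2)·c for an explicit constant c (with D(R) ≈ 1/2 − √(R ln 2 / 2) as R → 0⁺, the limit is (1−2p)² ln 2). -/

import Mathlib

set_option maxHeartbeats 1000000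
open Filter Real

private lemma auxlog (c : ℝ) :
    Tendsto (fun t : ℝ => Real.log (1 + c * t) / t) (nhdsWithin 0 {(0:ℝ)}ᶜ) (nhds c) := by
  have h1 : HasDerivAt (fun t : ℝ => 1 + c * t) c 0 := by
    simpa using ((hasDerivAt_id (0:ℝ)).const_mul c).const_add 1
  have h2 : HasDerivAt (fun t : ℝ => Real.log (1 + c * t)) c 0 := by
    simpa using h1.log (by norm_num)
  have h3 := hasDerivAt_iff_tendsto_slope.mp h2
  refine h3.congr fun t => ?_
  simp [slope_def_field]

private lemma sq_tendsto :
    Tendsto (fun ε : ℝ => ε ^ 2) (nhdsWithin 0 {(0:ℝ)}ᶜ) (nhdsWithin 0 {(0:ℝ)}ᶜ) := by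
  rw [tendsto_nhdsWithin_iff]
  constructor
  · simpa using ((continuous_pow 2).tendsto (0:ℝ)).mono_left nhdsWithin_le_nhds
  · filter_upwards [eventually_mem_nhdsWithin] with x hx
    exact pow_ne_zero 2 hx

private lemma auxlogsq (c : ℝ) :
    Tendsto (fun ε : ℝ => Real.log (1 + c * ε ^ 2) / ε ^ 2) (nhdsWithin 0 {(0:ℝ)}ᶜ) (nhds c) :=
  (auxlog c).comp sq_tendsto

private lemma gdiv :
    Tendsto (fun ε : ℝ =>
      ((1/2 - ε) * Real.log (1 - 2*ε) + (1/2 + ε) * Real.log (1 + 2*ε)) / ε ^ 2)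
      (nhdsWithin 0 {(0:ℝ)}ᶜ) (nhds 2) := by
  have hA := auxlogsq (-4)
  have hB := auxlog 2
  have hC := auxlog (-2)
  have h := ((hA.const_mul (1/2)).add hB).sub hC
  have h2 : ((1:ℝ)/2) * (-4) + 2 - (-2) = 2 := by norm_num
  rw [h2] at h
  apply h.congr'
  have hs : Set.Ioo (-(1:ℝ)/2) (1/2) ∩ {(0:ℝ)}ᶜ ∈ nhdsWithin (0:ℝ) {(0:ℝ)}ᶜ :=
    inter_mem (nhdsWithin_le_nhds (Ioo_mem_nhds (by norm_num) (by norm_num)))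
      self_mem_nhdsWithin
  filter_upwards [hs] with ε hε
  obtain ⟨⟨h1, h2⟩, h0⟩ := hε
  have e0 : (ε:ℝ) ≠ 0 := h0
  have p1 : (0:ℝ) < 1 - 2*ε := by linarith
  have p2 : (0:ℝ) < 1 + 2*ε := by linarith
  have hmul : Real.log (1 + (-4) * ε ^ 2) = Real.log (1 - 2*ε) + Real.log (1 + 2*ε) := by
    rw [show (1:ℝ) + (-4) * ε ^ 2 = (1 - 2*ε) * (1 + 2*ε) by ring,
      Real.log_mul p1.ne' p2.ne']
  rw [hmul]
  have : Real.log (1 + 2 * ε) = Real.log (1 + 2*ε) := rfl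
  field_simp
  ring_nf

/-- For `p ∈ [0, 1/2)`, with `ρ_p(R) = p(1−D(R)) + (1−p)D(R)` where `D(R)` is the inverse of
`R = 1 − H₂(D)`, the decay rate
`I_p(R) = −(1/R){ln 2 + (1/2)ln ρ_p(R) + (1/2)ln(1−ρ_p(R))}` converges, as `R → 0⁺`,
to the finite positive limit `(1−2p)² ln 2`. -/
theorem stmt10 (p : ℝ) (hp : p ∈ Set.Ico (0 : ℝ) (1 / 2)) (H Dfun : ℝ → ℝ)
    (hH : ∀ x, H x = -(x * Real.logb 2 x) - (1 - x) * Real.logb 2 (1 - x))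
    (hD : ∀ R ∈ Set.Ioc (0 : ℝ) 1,
      Dfun R ∈ Set.Ico (0 : ℝ) (1 / 2) ∧ 1 - H (Dfun R) = R) :
    Tendsto (fun R : ℝ =>
        -(1 / R) * (Real.log 2
          + (1 / 2) * Real.log (p * (1 - Dfun R) + (1 - p) * Dfun R)
          + (1 / 2) * Real.log (1 - (p * (1 - Dfun R) + (1 - p) * Dfun R))))
      (nhdsWithin 0 (Set.Ioi 0)) (nhds ((1 - 2 * p) ^ 2 * Real.log 2)) := by
  have hlog2 : (0:ℝ) < Real.log 2 := Real.log_pos (by norm_num)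
  obtain ⟨q, hqdef⟩ : ∃ q : ℝ, q = 1 - 2 * p := ⟨_, rfl⟩
  have hq0 : 0 < q := by have := hp.2; rw [hqdef]; linarith
  have hq1 : q ≤ 1 := by have := hp.1; rw [hqdef]; linarith
  -- H in terms of binEntropy
  have hHbin : ∀ x, Real.binEntropy x = H x * Real.log 2 := by
    intro x
    rw [hH x]
    simp only [Real.binEntropy, Real.logb, Real.log_inv]
    field_simp
    ring
  obtain ⟨g, hgdef⟩ : ∃ g : ℝ → ℝ, g = fun ε =>
      (1/2 - ε) * Real.log (1 - 2*ε) + (1/2 + ε) * Real.log (1 + 2*ε) := ⟨_, rfl⟩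
  have hbinE : ∀ ε : ℝ, |ε| < 1/2 → Real.binEntropy (1/2 - ε) = Real.log 2 - g ε := by
    intro ε hε
    rw [abs_lt] at hε
    have p1 : (0:ℝ) < 1 - 2*ε := by linarith [hε.2]
    have p2 : (0:ℝ) < 1 + 2*ε := by linarith [hε.1]
    have e1 : Real.log (1/2 - ε) = Real.log (1 - 2*ε) - Real.log 2 := by
      rw [show (1:ℝ)/2 - ε = (1 - 2*ε) / 2 by ring, Real.log_div p1.ne' (by norm_num)]
    have e2 : Real.log (1 - (1/2 - ε)) = Real.log (1 + 2*ε) - Real.log 2 := by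
      rw [show (1:ℝ) - (1/2 - ε) = (1 + 2*ε) / 2 by ring, Real.log_div p2.ne' (by norm_num)]
    rw [Real.binEntropy_eq_negMulLog_add_negMulLog_one_sub, Real.negMulLog, Real.negMulLog,
      e1, e2, hgdef]
    ring
  have hmono := Real.binEntropy_strictMonoOn.monotoneOn
  have heps0 : Tendsto (fun R => 1/2 - Dfun R) (nhdsWithin 0 (Set.Ioi 0)) (nhds 0) := by
    rw [tendsto_order]
    constructor
    · intro b hb
      filter_upwards [Ioo_mem_nhdsGT_of_mem (Set.mem_Ico.mpr ⟨le_refl 0, one_pos⟩)] with R hR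
      have h := (hD R ⟨hR.1, hR.2.le⟩).1
      have := h.2
      linarith
    · intro b hb
      have hδ0 : 0 < min b (1/4) := lt_min hb (by norm_num)
      have hδ4 : min b (1/4) ≤ 1/4 := min_le_right _ _
      have hx : Real.binEntropy (1/2 - min b (1/4)) < Real.log 2 :=
        Real.binEntropy_lt_log_two.mpr (by
          intro hcon
          rw [show ((2:ℝ))⁻¹ = 1/2 by norm_num] at hcon
          linarith)
      have hT0 : 0 < (Real.log 2 - Real.binEntropy (1/2 - min b (1/4))) / Real.log 2 :=
        div_pos (by linarith) hlog2
      have hT' : 0 < min 1 ((Real.log 2 - Real.binEntropy (1/2 - min b (1/4))) / Real.log 2) :=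
        lt_min one_pos hT0
      filter_upwards [Ioo_mem_nhdsGT_of_mem (Set.mem_Ico.mpr ⟨le_refl 0, hT'⟩)] with R hR
      obtain ⟨hR0, hR1⟩ := hR
      have hRT : R < (Real.log 2 - Real.binEntropy (1/2 - min b (1/4))) / Real.log 2 :=
        lt_of_lt_of_le hR1 (min_le_right _ _)
      have hRle1 : R ≤ 1 := le_of_lt (lt_of_lt_of_le hR1 (min_le_left _ _))
      obtain ⟨hDmem, hDeq⟩ := hD R ⟨hR0, hRle1⟩
      by_contra hcon
      push_neg at hcon
      have hDx : Dfun R ≤ 1/2 - min b (1/4) := by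
        have : min b (1/4) ≤ b := min_le_left _ _
        linarith
      have hmem1 : Dfun R ∈ Set.Icc (0:ℝ) 2⁻¹ := ⟨hDmem.1, by
        have := hDmem.2; rw [show ((2:ℝ))⁻¹ = 1/2 by norm_num]; linarith⟩
      have hmem2 : 1/2 - min b (1/4) ∈ Set.Icc (0:ℝ) 2⁻¹ := by
        constructor
        · linarith
        · rw [show ((2:ℝ))⁻¹ = 1/2 by norm_num]; linarith
      have hle := hmono hmem1 hmem2 hDx
      have hEq : Real.binEntropy (Dfun R) = (1 - R) * Real.log 2 := by
        rw [hHbin]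
        have : H (Dfun R) = 1 - R := by linarith
        rw [this]
      rw [hEq] at hle
      rw [lt_div_iff₀ hlog2] at hRT
      nlinarith [hlog2]
  have hepsne : ∀ᶠ R in nhdsWithin (0:ℝ) (Set.Ioi 0), (0:ℝ) < 1/2 - Dfun R := by
    filter_upwards [Ioo_mem_nhdsGT_of_mem (Set.mem_Ico.mpr ⟨le_refl 0, one_pos⟩)] with R hR
    have h := (hD R ⟨hR.1, hR.2.le⟩).1.2
    linarith
  have heps : Tendsto (fun R => 1/2 - Dfun R) (nhdsWithin 0 (Set.Ioi 0))
      (nhdsWithin 0 {(0:ℝ)}ᶜ) := by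
    rw [tendsto_nhdsWithin_iff]
    exact ⟨heps0, hepsne.mono fun R hR => ne_of_gt hR⟩
  have hnum : Tendsto (fun ε : ℝ =>
      -(Real.log 2) * ((1/2) * (Real.log (1 + (-(4*q^2)) * ε ^ 2) / ε ^ 2)))
      (nhdsWithin 0 {(0:ℝ)}ᶜ) (nhds (2 * q^2 * Real.log 2)) := by
    have := ((auxlogsq (-(4*q^2))).const_mul (1/2)).const_mul (-(Real.log 2))
    convert this using 2
    ring
  have hΦ : Tendsto (fun ε : ℝ =>
      -(Real.log 2) * ((1/2) * Real.log (1 + (-(4*q^2)) * ε ^ 2)) / g ε)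
      (nhdsWithin 0 {(0:ℝ)}ᶜ) (nhds (q^2 * Real.log 2)) := by
    have hdiv := hnum.div gdiv (by norm_num)
    have hval : 2 * q^2 * Real.log 2 / 2 = q^2 * Real.log 2 := by ring
    rw [hval] at hdiv
    apply hdiv.congr'
    filter_upwards [eventually_mem_nhdsWithin] with ε hε
    have hε2 : (ε:ℝ)^2 ≠ 0 := pow_ne_zero 2 hε
    have key : ∀ a b : ℝ, (a / ε^2) / (b / ε^2) = a / b := by
      intro a b
      rcases eq_or_ne b 0 with hb | hb
      · simp [hb]
      · field_simp
        exact mul_div_cancel_right₀ a hε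
    simp only [Pi.div_apply, hgdef]
    rw [show -(Real.log 2) * ((1/2) * (Real.log (1 + (-(4*q^2)) * ε ^ 2) / ε ^ 2))
        = (-(Real.log 2) * ((1/2) * Real.log (1 + (-(4*q^2)) * ε ^ 2))) / ε ^ 2 from by ring]
    exact key _ _
  have hcomp := hΦ.comp heps
  have hfinal : ((1:ℝ) - 2*p)^2 * Real.log 2 = q^2 * Real.log 2 := by rw [hqdef]
  rw [show ((1:ℝ) - 2*p)^2 * Real.log 2 = q^2 * Real.log 2 from hfinal]
  apply hcomp.congr'
  filter_upwards [Ioo_mem_nhdsGT_of_mem (Set.mem_Ico.mpr ⟨le_refl 0, one_pos⟩),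
    heps0.eventually (eventually_lt_nhds (by norm_num : (0:ℝ) < 1/2)),
    hepsne] with R hR hεsmall hεpos
  obtain ⟨hR0, hR1⟩ := hR
  obtain ⟨hDmem, hDeq⟩ := hD R ⟨hR0, hR1.le⟩
  obtain ⟨ε, hεdef⟩ : ∃ ε : ℝ, ε = 1/2 - Dfun R := ⟨_, rfl⟩
  rw [← hεdef] at hεsmall hεpos
  have habs : |ε| < 1/2 := abs_lt.mpr ⟨by linarith, hεsmall⟩
  have hρ : p * (1 - Dfun R) + (1 - p) * Dfun R = 1/2 - q * ε := by
    rw [hqdef, hεdef]; ring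
  have hqε : q * ε < 1/2 := by nlinarith
  have hρpos : (0:ℝ) < 1/2 - q * ε := by linarith
  have hρpos' : (0:ℝ) < 1/2 + q * ε := by nlinarith [mul_pos hq0 hεpos]
  have hNpos : (0:ℝ) < 1 + (-(4*q^2)) * ε^2 := by nlinarith [mul_pos hρpos hρpos']
  have hgR : g ε = R * Real.log 2 := by
    have hb := hbinE ε habs
    have hx : (1:ℝ)/2 - ε = Dfun R := by rw [hεdef]; ring
    rw [hx, hHbin] at hb
    have hHval : H (Dfun R) = 1 - R := by linarith
    rw [hHval] at hb
    linear_combination hb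
  have hloghalf : Real.log 2 + (1/2) * Real.log (1/2 - q*ε) + (1/2) * Real.log (1/2 + q*ε)
      = (1/2) * Real.log (1 + (-(4*q^2)) * ε^2) := by
    have hm : Real.log ((1/2 - q*ε) * (1/2 + q*ε))
        = Real.log (1/2 - q*ε) + Real.log (1/2 + q*ε) :=
      Real.log_mul hρpos.ne' hρpos'.ne'
    have h4 : Real.log ((1/2 - q*ε) * (1/2 + q*ε))
        = Real.log (1 + (-(4*q^2)) * ε^2) - Real.log 4 := by
      rw [show ((1:ℝ)/2 - q*ε) * (1/2 + q*ε) = (1 + (-(4*q^2)) * ε^2) / 4 by ring,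
        Real.log_div hNpos.ne' (by norm_num)]
    have h24 : Real.log 4 = 2 * Real.log 2 := by
      rw [show (4:ℝ) = 2^2 by norm_num, Real.log_pow]; push_cast; ring
    linarith
  have hone : (1:ℝ) - (1/2 - q * ε) = 1/2 + q * ε := by ring
  simp only [Function.comp]
  rw [hρ, hone, hloghalf, ← hεdef, hgR]
  have hRne : R ≠ 0 := ne_of_gt hR0
  field_simp
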